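/- Let K be a lower finite normed lattice and a ∈ K. Then the set Sk_a(K) of finite preskeletons containing an element x with a ≤ x and ∂a = ∂x is dense in the poset Sk(K) of all finite preskeletons of K ordered by reverse containment; i.e., every finite preskeleton extends to a finite preskeleton in Sk_a(K). -/

import Mathlib

/-!
Given a finite preskeleton `E`, let `x` be the join of `a` with the projections `z_{(∂a)}`,
`z ∈ E`. Then `∂x = ∂a`, and every `y ∈ E` with `∂y ≤ ∂a` lies below `x`, hence below every
projection of `x` of the same norm as `y`. So `E ∪ Proj(x)` is again a preskeleton, finite
since `Proj(x)` lies in the finite ideal below `x`.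
-/

namespace NormedLattice

variable {K : Type*} [Lattice K] {d : K → Ordinal} {p : K → Ordinal → K}

def IsPreskeleton (d : K → Ordinal) (p : K → Ordinal → K) (F : Set K) : Prop :=
  (∀ ξ : Ordinal, IsChain (· ≤ ·) {x ∈ F | d x = ξ}) ∧ ∀ x ∈ F, ∀ ξ : Ordinal, p x ξ ∈ F

theorem monotone_of_map_sup (hd : ∀ x y : K, d (x ⊔ y) = max (d x) (d y)) : Monotone d := by
  intro u v huv
  calc d u ≤ max (d u) (d v) := le_max_left _ _
    _ = d v := by rw [← hd, sup_eq_right.mpr huv]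

section Projection

variable (hp : ∀ (x : K) (ξ : Ordinal), IsGreatest {z : K | z ≤ x ∧ d z ≤ ξ} (p x ξ))
include hp

theorem proj_le (x : K) (ξ : Ordinal) : p x ξ ≤ x := (hp x ξ).1.1

theorem norm_proj_le (x : K) (ξ : Ordinal) : d (p x ξ) ≤ ξ := (hp x ξ).1.2

theorem le_proj {x z : K} {ξ : Ordinal} (hzx : z ≤ x) (hz : d z ≤ ξ) : z ≤ p x ξ :=
  (hp x ξ).2 ⟨hzx, hz⟩

theorem proj_eq_self {x : K} {ξ : Ordinal} (hx : d x ≤ ξ) : p x ξ = x :=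
  le_antisymm (proj_le hp x ξ) (le_proj hp le_rfl hx)

theorem proj_mono (x : K) : Monotone (p x) := fun _ _ hξ =>
  le_proj hp (proj_le hp x _) ((norm_proj_le hp x _).trans hξ)

theorem proj_proj (hd : Monotone d) (x : K) (ξ ξ' : Ordinal) :
    p (p x ξ') ξ = p x (min ξ ξ') := by
  refine (hp (p x ξ') ξ).unique ⟨⟨?_, ?_⟩, ?_⟩
  · exact proj_mono hp x (min_le_right _ _)
  · exact (norm_proj_le hp x _).trans (min_le_left _ _)
  · rintro w ⟨hw, hwξ⟩
    exact le_proj hp (hw.trans (proj_le hp x _))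
      (le_min hwξ ((hd hw).trans (norm_proj_le hp x ξ')))

theorem isPreskeleton_range_proj (hd : Monotone d) (x : K) :
    IsPreskeleton d p (Set.range (p x)) := by
  refine ⟨fun ξ => (proj_mono hp x).isChain_range.mono fun _ hy => hy.1, ?_⟩
  rintro _ ⟨ξ', rfl⟩ ξ
  exact ⟨min ξ ξ', (proj_proj hp hd x ξ ξ').symm⟩

theorem isPreskeleton_union_range_proj (hd : Monotone d) {E : Set K} (hE : IsPreskeleton d p E)
    {x : K} (hEx : ∀ y ∈ E, d y ≤ d x → y ≤ x) :
    IsPreskeleton d p (E ∪ Set.range (p x)) := by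
  obtain ⟨hPchain, hPproj⟩ := isPreskeleton_range_proj hp hd x
  refine ⟨fun ξ => ?_, ?_⟩
  · change IsChain _ {z | (z ∈ E ∨ z ∈ Set.range (p x)) ∧ d z = ξ}
    rw [Set.sep_union, isChain_union]
    refine ⟨hE.1 ξ, hPchain ξ, ?_⟩
    rintro y ⟨hyE, hyξ⟩ _ ⟨⟨ξ', rfl⟩, hqξ⟩ -
    have hdy : d y = d (p x ξ') := hyξ.trans hqξ.symm
    have hyx : y ≤ x := hEx y hyE (hdy.trans_le (hd (proj_le hp x ξ')))
    exact Or.inl (le_proj hp hyx (hdy.trans_le (norm_proj_le hp x ξ')))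
  · rintro z (hz | hz) ξ
    exacts [Or.inl (hE.2 z hz ξ), Or.inr (hPproj z hz ξ)]

theorem exists_le_norm_eq_forall_le (hd : ∀ x y : K, d (x ⊔ y) = max (d x) (d y))
    (a : K) (E : Finset K) :
    ∃ x, a ≤ x ∧ d x = d a ∧ ∀ y ∈ E, d y ≤ d a → y ≤ x := by
  classical
  let x := (insert a E).sup' (Finset.insert_nonempty a E) (fun z => p z (d a))
  have hpx : ∀ z ∈ insert a E, p z (d a) ≤ x := fun z hz =>
    Finset.le_sup' (fun z => p z (d a)) hz
  have hax : a ≤ x := (proj_eq_self hp le_rfl).ge.trans (hpx a (Finset.mem_insert_self a E))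
  refine ⟨x, hax, le_antisymm ?_ (monotone_of_map_sup hd hax), fun y hy hya => ?_⟩
  · rw [Finset.apply_sup'_eq_sup'_comp _ d hd, Finset.sup'_le_iff]
    exact fun z _ => norm_proj_le hp z (d a)
  · exact (proj_eq_self hp hya).ge.trans (hpx y (Finset.mem_insert_of_mem hy))

end Projection

end NormedLattice

open NormedLattice in
theorem stmt_13_general (K : Type*) [Lattice K]
    (hLF : ∀ q : K, (Set.Iic q).Finite)
    (d : K → Ordinal) (hd : ∀ x y : K, d (x ⊔ y) = max (d x) (d y))
    (p : K → Ordinal → K)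
    (hp : ∀ (x : K) (ξ : Ordinal), IsGreatest {z : K | z ≤ x ∧ d z ≤ ξ} (p x ξ))
    (a : K) :
    ∀ E : Finset K,
      (∀ ξ : Ordinal, IsChain (· ≤ ·) {x ∈ (E : Set K) | d x = ξ}) →
      (∀ x ∈ E, ∀ ξ : Ordinal, p x ξ ∈ E) →
      ∃ F : Finset K, E ⊆ F ∧
        (∀ ξ : Ordinal, IsChain (· ≤ ·) {x ∈ (F : Set K) | d x = ξ}) ∧
        (∀ x ∈ F, ∀ ξ : Ordinal, p x ξ ∈ F) ∧
        ∃ x ∈ F, a ≤ x ∧ d a = d x := by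
  classical
  intro E hchain hproj
  obtain ⟨x, hax, hdx, hEx⟩ := exists_le_norm_eq_forall_le hp hd a E
  have hProj_finite : (Set.range (p x)).Finite :=
    (hLF x).subset (Set.range_subset_iff.mpr (proj_le hp x))
  have hF : IsPreskeleton d p (E ∪ hProj_finite.toFinset : Finset K) := by
    rw [Finset.coe_union, hProj_finite.coe_toFinset]
    exact isPreskeleton_union_range_proj hp (monotone_of_map_sup hd) ⟨hchain, hproj⟩
      (fun y hy hyx => hEx y hy (hdx ▸ hyx))
  refine ⟨E ∪ hProj_finite.toFinset, Finset.subset_union_left, hF.1, hF.2, x, ?_, hax, hdx.symm⟩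
  exact Finset.mem_union_right _ (hProj_finite.mem_toFinset.mpr ⟨d x, proj_eq_self hp le_rfl⟩)

/-- For each a in a lower finite normed lattice K, the set Sk_a(K) of finite preskeletons
containing some x with a ≤ x and ∂a = ∂x is dense in the poset of finite preskeletons
ordered by reverse containment: every finite preskeleton E extends to a finite preskeleton
F ∈ Sk_a(K). -/
theorem stmt_13 (K : Type*) [Lattice K] [OrderBot K]
    (hLF : ∀ q : K, (Set.Iic q).Finite)
    (d : K → Ordinal) (hd : ∀ x y : K, d (x ⊔ y) = max (d x) (d y)) (hd0 : d ⊥ = 0)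
    (p : K → Ordinal → K)
    (hp : ∀ (x : K) (ξ : Ordinal), IsGreatest {z : K | z ≤ x ∧ d z ≤ ξ} (p x ξ))
    (a : K) :
    ∀ E : Finset K,
      (∀ ξ : Ordinal, IsChain (· ≤ ·) {x ∈ (E : Set K) | d x = ξ}) →
      (∀ x ∈ E, ∀ ξ : Ordinal, p x ξ ∈ E) →
      ∃ F : Finset K, E ⊆ F ∧
        (∀ ξ : Ordinal, IsChain (· ≤ ·) {x ∈ (F : Set K) | d x = ξ}) ∧
        (∀ x ∈ F, ∀ ξ : Ordinal, p x ξ ∈ F) ∧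
        ∃ x ∈ F, a ≤ x ∧ d a = d x :=
  stmt_13_general K hLF d hd p hp a
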